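/- arXiv:0912.2499 — 2 statements merged into one kernel-verified Lean document; each statement's English description precedes it below -/
import Mathlib

section
/- (Resolvent bound.) Let N ≥ 1, let X be an arbitrary N×N complex matrix, and let p = a + bj be a quaternion with a, b ∈ ℂ and b ≠ 0. Then the 2N×2N matrix 𝐗 − 𝐩 is invertible, and its inverse satisfies ‖(𝐗 − 𝐩)⁻¹‖ ≤ 1/sqrt(x² + |b|²) ≤ 1/|b|, where x is the smallest singular value of X − a·I and ‖·‖ is the spectral norm. Moreover every 2×2 block ((𝐗 − 𝐩)⁻¹)_{ij} has spectral norm at most 1/|b|. -/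
open MeasureTheory ProbabilityTheory Matrix Filter Topology
open scoped ComplexConjugate

noncomputable section

/-- The spectral (operator) norm of a square complex matrix. -/
def specNorm {n : Type*} [Fintype n] [DecidableEq n] (M : Matrix n n ℂ) : ℝ :=
  ‖Matrix.toEuclideanCLM (𝕜 := ℂ) (n := n) M‖

/-- The smallest singular value of a square complex matrix. -/
def leastSingular {n : Type*} [Fintype n] [DecidableEq n] (M : Matrix n n ℂ) : ℝ :=
  ⨅ v : {v : EuclideanSpace ℂ n // ‖v‖ = 1},
    ‖Matrix.toEuclideanCLM (𝕜 := ℂ) (n := n) M v.1‖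

/-- The 2×2 matrix representation of the quaternion `a + b·j`, encoded as the pair `(a, b)`. -/
def qmat (p : ℂ × ℂ) : Matrix (Fin 2) (Fin 2) ℂ :=
  !![p.1, Complex.I * p.2; Complex.I * conj p.2, conj p.1]

/-- The quaternion norm `|a + b·j| = sqrt(|a|² + |b|²)`. -/
def qnorm (p : ℂ × ℂ) : ℝ := Real.sqrt (‖p.1‖ ^ 2 + ‖p.2‖ ^ 2)

/-- Quaternion multiplication: `(a + bj)(c + dj) = (ac − b·conj d) + (ad + b·conj c)·j`. -/
def qmul (p q : ℂ × ℂ) : ℂ × ℂ :=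
  (p.1 * q.1 - p.2 * conj q.2, p.1 * q.2 + p.2 * conj q.1)

/-- Quaternion inverse. -/
def qinv (p : ℂ × ℂ) : ℂ × ℂ :=
  (conj p.1 / ((‖p.1‖ ^ 2 + ‖p.2‖ ^ 2 : ℝ) : ℂ),
   -p.2 / ((‖p.1‖ ^ 2 + ‖p.2‖ ^ 2 : ℝ) : ℂ))

/-- The elementwise product of quaternions: `(a + bj)·(c + dj) = ac + bd·j`. -/
def qdot (p q : ℂ × ℂ) : ℂ × ℂ := (p.1 * q.1, p.2 * q.2)

/-- The `2N×2N` doubling of an `N×N` matrix `X`, whose `(i,j)`-th `2×2` block is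
`[[X i j, 0], [0, conj (X j i)]]`. -/
def dbl {N : ℕ} (X : Matrix (Fin N) (Fin N) ℂ) :
    Matrix (Fin N × Fin 2) (Fin N × Fin 2) ℂ :=
  Matrix.of fun r s =>
    if r.2 = 0 ∧ s.2 = 0 then X r.1 s.1
    else if r.2 = 1 ∧ s.2 = 1 then conj (X s.1 r.1) else 0

/-- The matrix `𝐪 ⊗ I_N` of a quaternion `q` acting on `2N×2N` matrices. -/
def qId {N : ℕ} (p : ℂ × ℂ) : Matrix (Fin N × Fin 2) (Fin N × Fin 2) ℂ :=
  Matrix.of fun r s => if r.1 = s.1 then qmat p r.2 s.2 else 0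

/-- The `2N×2N` matrix `𝐙𝐣 = (dbl Z) · (𝐣 ⊗ I_N)`, whose `(i,j)`-th `2×2` block is
`[[0, i·Z i j], [i·conj (Z j i), 0]]`. -/
def dblJ {N : ℕ} (Z : Matrix (Fin N) (Fin N) ℂ) :
    Matrix (Fin N × Fin 2) (Fin N × Fin 2) ℂ :=
  Matrix.of fun r s =>
    if r.2 = 0 ∧ s.2 = 1 then Complex.I * Z r.1 s.1
    else if r.2 = 1 ∧ s.2 = 0 then Complex.I * conj (Z s.1 r.1) else 0

/-- The `(i,j)`-th `2×2` block of a `2N×2N` matrix. -/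
def blk {N : ℕ} (M : Matrix (Fin N × Fin 2) (Fin N × Fin 2) ℂ) (i j : Fin N) :
    Matrix (Fin 2) (Fin 2) ℂ :=
  Matrix.of fun s t => M (i, s) (j, t)

/-- The quaternionic Green's function `𝒢(p; X) = α + βj`: with
`𝐌 = (1/N)·Σ_i ((dbl X − 𝐩 ⊗ I_N)⁻¹)_{ii}` the average of the diagonal `2×2` blocks of
the resolvent, `α = 𝐌 0 0` and `β = −i·(𝐌 0 1)`. -/
def qGreen {N : ℕ} (p : ℂ × ℂ) (X : Matrix (Fin N) (Fin N) ℂ) : ℂ × ℂ :=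
  let R : Matrix (Fin N × Fin 2) (Fin N × Fin 2) ℂ := (dbl X - qId p)⁻¹
  ((N : ℂ)⁻¹ * ∑ i : Fin N, R (i, 0) (i, 0),
   -Complex.I * ((N : ℂ)⁻¹ * ∑ i : Fin N, R (i, 0) (i, 1)))

/-- The normalised `N×N` random matrix `A_N` with entries `ξ i j / √N`. -/
def rmat {Ω : Type*} (ξ : ℕ → ℕ → Ω → ℂ) (N : ℕ) (ω : Ω) :
    Matrix (Fin N) (Fin N) ℂ :=
  Matrix.of fun i j : Fin N => ξ (i : ℕ) (j : ℕ) ω / ((Real.sqrt N : ℝ) : ℂ)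

/-- The entrywise expectation (Bochner integral) of a random matrix. -/
def Emat {Ω : Type*} [MeasurableSpace Ω] (μ : Measure Ω) {n m : Type*}
    (f : Ω → Matrix n m ℂ) : Matrix n m ℂ :=
  Matrix.of fun i j => ∫ ω, f ω i j ∂μ

/-- The entrywise expectation of a random quaternion. -/
def Equat {Ω : Type*} [MeasurableSpace Ω] (μ : Measure Ω) (f : Ω → ℂ × ℂ) : ℂ × ℂ :=
  (∫ ω, (f ω).1 ∂μ, ∫ ω, (f ω).2 ∂μ)

/-- The standard complex Gaussian measure on `ℂ`, with density `π⁻¹·exp(−|z|²)`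
with respect to Lebesgue measure. -/
def gaussianC : Measure ℂ :=
  MeasureTheory.volume.withDensity fun z =>
    ENNReal.ofReal (Real.exp (-(‖z‖) ^ 2) / Real.pi)

/-- `A` and `B` are independent `N×N` random matrices whose entries are i.i.d. standard
complex Gaussian: the joint law of all the entries of `A` and `B` is the corresponding
product of standard complex Gaussian measures. -/
structure IsGaussianPair {Ω : Type*} [MeasurableSpace Ω] (μ : Measure Ω) {N : ℕ}
    (A B : Ω → Matrix (Fin N) (Fin N) ℂ) : Prop where
  measA : ∀ i j, Measurable fun ω => A ω i j
  measB : ∀ i j, Measurable fun ω => B ω i j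
  law : Measure.map (fun ω =>
      Sum.elim (fun ij : Fin N × Fin N => A ω ij.1 ij.2)
        (fun ij : Fin N × Fin N => B ω ij.1 ij.2)) μ
    = Measure.pi fun _ : (Fin N × Fin N) ⊕ (Fin N × Fin N) => gaussianC

/-- Assumptions A1–A4 of the paper on the infinite array `ξ`:
(A1) zero mean, (A2) unit variance, (A3) third absolute moments bounded by `Cξ`,
(A4) the pairs `(ξ i j, ξ j i)` over unordered pairs `{i,j}` are jointly independent,
and `E[ξ i j · ξ j i] = τ` for `i ≠ j`. -/
structure IsIIDArray {Ω : Type*} [MeasurableSpace Ω] (μ : Measure Ω)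
    (ξ : ℕ → ℕ → Ω → ℂ) (Cξ τ : ℝ) : Prop where
  meas : ∀ i j, Measurable (ξ i j)
  int1 : ∀ i j, Integrable (ξ i j) μ
  mean_zero : ∀ i j, ∫ ω, ξ i j ω ∂μ = 0
  int2 : ∀ i j, Integrable (fun ω => ‖ξ i j ω‖ ^ 2) μ
  var_one : ∀ i j, ∫ ω, ‖ξ i j ω‖ ^ 2 ∂μ = 1
  int3 : ∀ i j, Integrable (fun ω => ‖ξ i j ω‖ ^ 3) μ
  third_moment : ∀ i j, ∫ ω, ‖ξ i j ω‖ ^ 3 ∂μ ≤ Cξ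
  indep : iIndepFun
      (fun p : {p : ℕ × ℕ // p.1 ≤ p.2} => fun ω =>
        (ξ p.1.1 p.1.2 ω, ξ p.1.2 p.1.1 ω)) μ
  int_cov : ∀ i j, Integrable (fun ω => ξ i j ω * ξ j i ω) μ
  cov : ∀ i j, i ≠ j → ∫ ω, ξ i j ω * ξ j i ω ∂μ = (τ : ℂ)

end

/-! Split `v ∈ ℂ^(N×2)` into the two components `v₀, v₁ ∈ ℂ^N` of its `2`-blocks and put
`Y = X − a`. Then `𝐗 − 𝐩` maps `v` to `(Y v₀ − ib v₁, Yᴴ v₁ + conj(ib) v₀)`; the cross terms of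
the squared norm cancel, leaving `‖Y v₀‖² + ‖Yᴴ v₁‖² + |b|²‖v‖² ≥ (x² + |b|²)‖v‖²`, because `Y`
and `Yᴴ` are bounded below by the same `x`. Such a lower bound makes `𝐗 − 𝐩` invertible with
`‖(𝐗 − 𝐩)⁻¹‖ ≤ 1/√(x² + |b|²)`, and each `2×2` block is a compression of the inverse. -/

namespace Matrix

open scoped Matrix.Norms.L2Operator

variable {𝕜 : Type*} [RCLike 𝕜] {l m n o : Type*} [Fintype l] [Fintype m] [Fintype n] [Fintype o]
  [DecidableEq l] [DecidableEq m] [DecidableEq n] [DecidableEq o]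

lemma l2_opNorm_one_submatrix_le {f : l → m} (hf : Function.Injective f) :
    ‖(1 : Matrix m m 𝕜).submatrix f id‖ ≤ 1 := by
  have hS : ((1 : Matrix m m 𝕜).submatrix f id) * ((1 : Matrix m m 𝕜).submatrix f id)ᴴ = 1 := by
    rw [conjTranspose_submatrix, conjTranspose_one,
      ← submatrix_mul _ _ _ id _ Function.bijective_id, Matrix.mul_one, submatrix_one _ hf]
  have h1 : ‖(1 : Matrix l l 𝕜)‖ ≤ 1 := by
    rw [← diagonal_one, l2_opNorm_diagonal]
    exact pi_norm_le_iff_of_nonneg zero_le_one |>.2 fun _ => by simp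
  have := l2_opNorm_conjTranspose_mul_self ((1 : Matrix m m 𝕜).submatrix f id)ᴴ
  rw [conjTranspose_conjTranspose, hS, l2_opNorm_conjTranspose] at this
  nlinarith [norm_nonneg ((1 : Matrix m m 𝕜).submatrix f id)]

lemma l2_opNorm_submatrix_le (A : Matrix m n 𝕜) {f : l → m} {g : o → n}
    (hf : Function.Injective f) (hg : Function.Injective g) :
    ‖A.submatrix f g‖ ≤ ‖A‖ := by
  have hA : A.submatrix f g
      = (1 : Matrix m m 𝕜).submatrix f id * A * ((1 : Matrix n n 𝕜).submatrix g id)ᴴ := by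
    ext i j
    simp [mul_apply, one_apply]
  calc ‖A.submatrix f g‖
      ≤ ‖(1 : Matrix m m 𝕜).submatrix f id‖ * ‖A‖ * ‖((1 : Matrix n n 𝕜).submatrix g id)ᴴ‖ := by
        rw [hA]
        exact (l2_opNorm_mul _ _).trans
          (mul_le_mul_of_nonneg_right (l2_opNorm_mul _ _) (norm_nonneg _))
    _ ≤ 1 * ‖A‖ * 1 := by
        rw [l2_opNorm_conjTranspose]
        gcongr
        · exact l2_opNorm_one_submatrix_le hf
        · exact l2_opNorm_one_submatrix_le hg
    _ = ‖A‖ := by ring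

end Matrix

namespace ContinuousLinearMap

variable {𝕜 E F : Type*} [RCLike 𝕜] [NormedAddCommGroup E] [InnerProductSpace 𝕜 E]
  [NormedAddCommGroup F] [InnerProductSpace 𝕜 F]

lemma norm_sub_smul_sq_add_norm_adjoint_add_smul_sq [CompleteSpace E] [CompleteSpace F]
    (T : E →L[𝕜] F) (c : 𝕜) (u : E) (w : F) :
    ‖T u - c • w‖ ^ 2 + ‖adjoint T w + conj c • u‖ ^ 2
      = ‖T u‖ ^ 2 + ‖adjoint T w‖ ^ 2 + ‖c‖ ^ 2 * (‖u‖ ^ 2 + ‖w‖ ^ 2) := by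
  have hcross : RCLike.re (inner 𝕜 (adjoint T w) (conj c • u))
      = RCLike.re (inner 𝕜 (T u) (c • w)) := by
    rw [inner_smul_right, inner_smul_right, adjoint_inner_left, ← inner_conj_symm (T u),
      ← RCLike.conj_re, map_mul, RCLike.conj_conj]
  rw [norm_sub_sq (𝕜 := 𝕜), norm_add_sq (𝕜 := 𝕜), hcross, norm_smul, norm_smul, RCLike.norm_conj]
  ring

lemma mul_norm_le_norm_adjoint_apply [CompleteSpace E] [FiniteDimensional 𝕜 E]
    {T : E →L[𝕜] E} {c : ℝ} (h : ∀ v, c * ‖v‖ ≤ ‖T v‖) (u : E) : c * ‖u‖ ≤ ‖adjoint T u‖ := by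
  rcases le_or_gt c 0 with hc | hc
  · exact (mul_nonpos_of_nonpos_of_nonneg hc (norm_nonneg u)).trans (norm_nonneg _)
  have hinj : Function.Injective T := by
    refine (injective_iff_map_eq_zero T).2 fun v hv => norm_eq_zero.1 ?_
    have := h v
    rw [hv, norm_zero] at this
    exact le_antisymm (nonpos_of_mul_nonpos_right this hc) (norm_nonneg v)
  obtain ⟨v, hv⟩ := (LinearMap.injective_iff_surjective (f := (T : E →ₗ[𝕜] E))).1 hinj u
  rw [coe_coe] at hv
  subst hv
  have hcs : ‖T v‖ ^ 2 ≤ ‖v‖ * ‖adjoint T (T v)‖ := by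
    calc ‖T v‖ ^ 2 = RCLike.re (inner 𝕜 (T v) (T v)) := (inner_self_eq_norm_sq (𝕜 := 𝕜) _).symm
      _ = RCLike.re (inner 𝕜 v (adjoint T (T v))) := by rw [adjoint_inner_right]
      _ ≤ ‖v‖ * ‖adjoint T (T v)‖ := re_inner_le_norm _ _
  rcases (norm_nonneg (T v)).eq_or_lt with h0 | hpos
  · rw [← h0, mul_zero]; exact norm_nonneg _
  refine le_of_mul_le_mul_right ?_ hpos
  nlinarith [mul_le_mul_of_nonneg_right (h v) (norm_nonneg (adjoint T (T v)))]

end ContinuousLinearMap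

namespace EuclideanSpace

variable {𝕜 ι κ : Type*} [RCLike 𝕜] [Fintype ι] [Fintype κ]

def slice (v : EuclideanSpace 𝕜 (ι × κ)) (s : κ) : EuclideanSpace 𝕜 ι :=
  WithLp.toLp 2 fun i => v (i, s)

lemma norm_sq_eq_sum_norm_slice_sq (v : EuclideanSpace 𝕜 (ι × κ)) :
    ‖v‖ ^ 2 = ∑ s, ‖slice v s‖ ^ 2 := by
  simp only [EuclideanSpace.norm_sq_eq, slice, Fintype.sum_prod_type]
  exact Finset.sum_comm

end EuclideanSpace

section LowerBound

variable {n : Type*} [Fintype n] [DecidableEq n]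

lemma leastSingular_nonneg (A : Matrix n n ℂ) : 0 ≤ leastSingular A :=
  Real.iInf_nonneg fun _ => norm_nonneg _

lemma leastSingular_mul_norm_le (A : Matrix n n ℂ) (v : EuclideanSpace ℂ n) :
    leastSingular A * ‖v‖ ≤ ‖toEuclideanCLM (𝕜 := ℂ) A v‖ := by
  rcases eq_or_ne v 0 with rfl | hv
  · simp
  have hnv : 0 < ‖v‖ := norm_pos_iff.2 hv
  have hunit : ‖((‖v‖⁻¹ : ℝ) : ℂ) • v‖ = 1 := by
    rw [norm_smul, Complex.norm_real, Real.norm_of_nonneg (inv_nonneg.2 hnv.le),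
      inv_mul_cancel₀ hnv.ne']
  have hle := ciInf_le
    (f := fun w : {w : EuclideanSpace ℂ n // ‖w‖ = 1} => ‖toEuclideanCLM (𝕜 := ℂ) A w.1‖)
    ⟨0, by rintro _ ⟨w, rfl⟩; exact norm_nonneg _⟩ ⟨_, hunit⟩
  rw [map_smul, norm_smul, Complex.norm_real, Real.norm_of_nonneg (inv_nonneg.2 hnv.le)] at hle
  rwa [le_inv_mul_iff₀ hnv, mul_comm] at hle

lemma isUnit_of_mul_norm_le {M : Matrix n n ℂ} {c : ℝ} (hc : 0 < c)
    (h : ∀ v, c * ‖v‖ ≤ ‖toEuclideanCLM (𝕜 := ℂ) M v‖) : IsUnit M := by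
  refine mulVec_injective_iff_isUnit.1 fun x y hxy => ?_
  have hxy' : toEuclideanCLM (𝕜 := ℂ) M (WithLp.toLp 2 (x - y)) = 0 := by
    rw [toEuclideanCLM_toLp, mulVec_sub, hxy, sub_self, WithLp.toLp_zero]
  have := h (WithLp.toLp 2 (x - y))
  rw [hxy', norm_zero] at this
  have h0 : ‖WithLp.toLp 2 (x - y)‖ = 0 :=
    le_antisymm (nonpos_of_mul_nonpos_right this hc) (norm_nonneg _)
  simpa [sub_eq_zero] using h0

open scoped Matrix.Norms.L2Operator in
lemma l2_opNorm_inv_le_of_mul_norm_le {M : Matrix n n ℂ} {c : ℝ} (hc : 0 < c)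
    (h : ∀ v, c * ‖v‖ ≤ ‖toEuclideanCLM (𝕜 := ℂ) M v‖) : ‖M⁻¹‖ ≤ c⁻¹ := by
  have hM : M * M⁻¹ = 1 :=
    mul_nonsing_inv M ((isUnit_iff_isUnit_det M).1 (isUnit_of_mul_norm_le hc h))
  rw [← l2_opNorm_toEuclideanCLM]
  refine ContinuousLinearMap.opNorm_le_bound _ (inv_nonneg.2 hc.le) fun u => ?_
  have hu := h (toEuclideanCLM (𝕜 := ℂ) M⁻¹ u)
  rw [← mul_apply_eq_comp, ← map_mul, hM, map_one, one_apply_eq_self] at hu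
  rwa [inv_mul_eq_div, le_div_iff₀ hc, mul_comm]

end LowerBound

section Doubling

open EuclideanSpace

variable {N : ℕ} (X : Matrix (Fin N) (Fin N) ℂ) (a b : ℂ)

lemma slice_dbl_sub_qId_apply_zero (v : EuclideanSpace ℂ (Fin N × Fin 2)) :
    slice (toEuclideanCLM (𝕜 := ℂ) (dbl X - qId (a, b)) v) 0
      = toEuclideanCLM (𝕜 := ℂ) (X - a • 1) (slice v 0) - (Complex.I * b) • slice v 1 := by
  ext i
  simp [slice, mulVec, dotProduct, Fintype.sum_prod_type, Fin.sum_univ_two, dbl, qId, qmat,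
    sub_mul, Finset.sum_sub_distrib, ite_mul, sub_sub]

lemma slice_dbl_sub_qId_apply_one (v : EuclideanSpace ℂ (Fin N × Fin 2)) :
    slice (toEuclideanCLM (𝕜 := ℂ) (dbl X - qId (a, b)) v) 1
      = toEuclideanCLM (𝕜 := ℂ) (X - a • 1)ᴴ (slice v 1) + conj (Complex.I * b) • slice v 0 := by
  ext i
  simp [slice, mulVec, dotProduct, Fintype.sum_prod_type, Fin.sum_univ_two, dbl, qId, qmat,
    sub_mul, Finset.sum_sub_distrib, ite_mul, ← sub_eq_add_neg, sub_sub,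
    add_comm (Complex.I * _ * v (i, 0))]

lemma norm_dbl_sub_qId_apply_sq (v : EuclideanSpace ℂ (Fin N × Fin 2)) :
    ‖toEuclideanCLM (𝕜 := ℂ) (dbl X - qId (a, b)) v‖ ^ 2
      = ‖toEuclideanCLM (𝕜 := ℂ) (X - a • 1) (slice v 0)‖ ^ 2
        + ‖ContinuousLinearMap.adjoint (toEuclideanCLM (𝕜 := ℂ) (X - a • 1)) (slice v 1)‖ ^ 2
        + ‖b‖ ^ 2 * ‖v‖ ^ 2 := by
  rw [norm_sq_eq_sum_norm_slice_sq, Fin.sum_univ_two, slice_dbl_sub_qId_apply_zero,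
    slice_dbl_sub_qId_apply_one, ← star_eq_conjTranspose, map_star,
    ContinuousLinearMap.star_eq_adjoint,
    ContinuousLinearMap.norm_sub_smul_sq_add_norm_adjoint_add_smul_sq,
    norm_sq_eq_sum_norm_slice_sq v, Fin.sum_univ_two, norm_mul, Complex.norm_I, one_mul]

lemma sqrt_mul_norm_le_norm_dbl_sub_qId_apply (v : EuclideanSpace ℂ (Fin N × Fin 2)) :
    √(leastSingular (X - a • 1) ^ 2 + ‖b‖ ^ 2) * ‖v‖
      ≤ ‖toEuclideanCLM (𝕜 := ℂ) (dbl X - qId (a, b)) v‖ := by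
  set x := leastSingular (X - a • 1)
  have h0 : x * ‖slice v 0‖ ≤ ‖toEuclideanCLM (𝕜 := ℂ) (X - a • 1) (slice v 0)‖ :=
    leastSingular_mul_norm_le _ _
  have h1 : x * ‖slice v 1‖
      ≤ ‖ContinuousLinearMap.adjoint (toEuclideanCLM (𝕜 := ℂ) (X - a • 1)) (slice v 1)‖ :=
    ContinuousLinearMap.mul_norm_le_norm_adjoint_apply (leastSingular_mul_norm_le _) _
  have hx : 0 ≤ x := leastSingular_nonneg _
  refine le_of_pow_le_pow_left₀ two_ne_zero (norm_nonneg _) ?_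
  rw [mul_pow, Real.sq_sqrt (by positivity), norm_dbl_sub_qId_apply_sq,
    norm_sq_eq_sum_norm_slice_sq v, Fin.sum_univ_two]
  nlinarith [pow_le_pow_left₀ (by positivity) h0 2, pow_le_pow_left₀ (by positivity) h1 2]

end Doubling

theorem resolvent_bound_general
    (N : ℕ) (X : Matrix (Fin N) (Fin N) ℂ)
    (a b : ℂ) (hb : b ≠ 0) :
    IsUnit (dbl X - qId (a, b)) ∧
    specNorm ((dbl X - qId (a, b))⁻¹)
      ≤ 1 / Real.sqrt (leastSingular (X - a • 1) ^ 2 + ‖b‖ ^ 2) ∧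
    1 / Real.sqrt (leastSingular (X - a • 1) ^ 2 + ‖b‖ ^ 2)
      ≤ 1 / ‖b‖ ∧
    ∀ i j : Fin N,
      specNorm (blk ((dbl X - qId (a, b))⁻¹) i j) ≤ 1 / ‖b‖ := by
  set c := √(leastSingular (X - a • 1) ^ 2 + ‖b‖ ^ 2)
  have hb0 : 0 < ‖b‖ := norm_pos_iff.2 hb
  have hbc : ‖b‖ ≤ c := Real.le_sqrt_of_sq_le (le_add_of_nonneg_left (sq_nonneg _))
  have hc : 0 < c := hb0.trans_le hbc
  have hlower := sqrt_mul_norm_le_norm_dbl_sub_qId_apply X a b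
  have hinv : specNorm (dbl X - qId (a, b))⁻¹ ≤ 1 / c := by
    rw [one_div]; exact l2_opNorm_inv_le_of_mul_norm_le hc hlower
  have hcb : 1 / c ≤ 1 / ‖b‖ := one_div_le_one_div_of_le hb0 hbc
  refine ⟨isUnit_of_mul_norm_le hc hlower, hinv, hcb, fun i j => ?_⟩
  exact (Matrix.l2_opNorm_submatrix_le _ (Prod.mk_right_injective i)
    (Prod.mk_right_injective j)).trans (hinv.trans hcb)

/-- **The resolvent bound.** For any `N×N` complex matrix `X` and quaternion `p = a + bj`
with `b ≠ 0`: `𝐗 − 𝐩` is invertible, `‖(𝐗 − 𝐩)⁻¹‖ ≤ 1/sqrt(x² + |b|²) ≤ 1/|b|` where `x`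
is the smallest singular value of `X − a·I`, and every `2×2` block of `(𝐗 − 𝐩)⁻¹` has
spectral norm at most `1/|b|`. -/
theorem resolvent_bound
    (N : ℕ) (hN : 1 ≤ N) (X : Matrix (Fin N) (Fin N) ℂ)
    (a b : ℂ) (hb : b ≠ 0) :
    IsUnit (dbl X - qId (a, b)) ∧
    specNorm ((dbl X - qId (a, b))⁻¹)
      ≤ 1 / Real.sqrt (leastSingular (X - a • 1) ^ 2 + ‖b‖ ^ 2) ∧
    1 / Real.sqrt (leastSingular (X - a • 1) ^ 2 + ‖b‖ ^ 2)
      ≤ 1 / ‖b‖ ∧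
    ∀ i j : Fin N,
      specNorm (blk ((dbl X - qId (a, b))⁻¹) i j) ≤ 1 / ‖b‖ :=
  resolvent_bound_general N X a b hb
end

section
/- Let N ≥ 1, let X be an arbitrary N×N complex matrix, and let p = a + bj be a quaternion with b ≠ 0. Then the quaternionic Green's function is well defined (𝐗 − 𝐩 is invertible) and satisfies the bound |𝒢(p; X)| ≤ 1/|b|, where |·| denotes the quaternion norm. -/
open MeasureTheory ProbabilityTheory Matrix Filter Topology
open scoped ComplexConjugate

/-!
Write `𝐗 − 𝐩 = 𝐊 − 𝐁` with `𝐊` the doubling of `X − a` and `𝐁 = 𝐛𝐣 ⊗ I_N`. The cross terms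
`𝐊𝐁ᴴ + 𝐁𝐊ᴴ` cancel, so `(𝐗 − 𝐩)(𝐗 − 𝐩)ᴴ = 𝐊𝐊ᴴ + |b|² ≥ |b|²`. Hence `𝐗 − 𝐩` is invertible and
every row of `R = (𝐗 − 𝐩)⁻¹` has Euclidean norm at most `1/|b|`. Up to the unimodular factor `−i`
on its `j`-part, `𝒢(p; X)` is the average over `i` of the vectors `(R (i,0) (i,0), R (i,0) (i,1))`,
each a piece of a row of `R`, so `|𝒢(p; X)| ≤ 1/|b|`.
-/

open scoped MatrixOrder ComplexOrder

theorem sub_mul_star_sub_of_add_eq_zero {R : Type*} [Ring R] [StarRing R] {a b : R}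
    (h : a * star b + b * star a = 0) : (a - b) * star (a - b) = a * star a + b * star b := by
  calc (a - b) * star (a - b) = a * star a + b * star b - (a * star b + b * star a) := by
        rw [star_sub]; noncomm_ring
    _ = a * star a + b * star b := by rw [h, sub_zero]

theorem Finset.norm_inv_card_smul_sum_le {ι 𝕜 E : Type*} [RCLike 𝕜] [SeminormedAddCommGroup E]
    [NormedSpace 𝕜 E] (s : Finset ι) (g : ι → E) {r : ℝ} (hr : 0 ≤ r)
    (hg : ∀ i ∈ s, ‖g i‖ ≤ r) : ‖(s.card : 𝕜)⁻¹ • ∑ i ∈ s, g i‖ ≤ r := by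
  rw [norm_smul, norm_inv, RCLike.norm_natCast]
  calc (s.card : ℝ)⁻¹ * ‖∑ i ∈ s, g i‖ ≤ (s.card : ℝ)⁻¹ * (s.card * r) := by
        gcongr
        exact (norm_sum_le _ _).trans
          ((Finset.sum_le_card_nsmul _ _ _ hg).trans_eq (nsmul_eq_mul _ _))
    _ ≤ r := by
        rw [← mul_assoc]
        exact mul_le_of_le_one_left hr (inv_mul_le_one_of_le₀ le_rfl (Nat.cast_nonneg _))

namespace Matrix

variable {𝕜 n : Type*} [RCLike 𝕜] [Fintype n] [DecidableEq n]

theorem isUnit_of_smul_one_le_mul_conjTranspose {A : Matrix n n 𝕜} {c : ℝ} (hc : 0 < c)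
    (h : (c : 𝕜) • 1 ≤ A * Aᴴ) : IsUnit A := by
  have hpos : (A * Aᴴ).PosDef := by
    simpa using (PosDef.one.smul (RCLike.ofReal_pos (K := 𝕜) |>.mpr hc)).add_posSemidef
      (le_iff.mp h)
  exact isUnit_of_mul_isUnit_left hpos.isUnit

theorem sum_norm_sq_inv_apply_le {A : Matrix n n 𝕜} {c : ℝ} (hc : 0 < c)
    (h : (c : 𝕜) • 1 ≤ A * Aᴴ) (r : n) : ∑ s, ‖A⁻¹ r s‖ ^ 2 ≤ c⁻¹ := by
  have hA := isUnit_of_smul_one_le_mul_conjTranspose hc h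
  -- `w` is the conjugate of row `r` of `A⁻¹`, so `Aᴴ w = e_r` and `c ‖w‖² ≤ ‖Aᴴ w‖² = 1`.
  set w : n → 𝕜 := star (A⁻¹ r)
  have hw : Aᴴ *ᵥ w = Pi.single r 1 := by
    rw [← star_vecMul, ← mul_apply_eq_vecMul,
      nonsing_inv_mul _ ((isUnit_iff_isUnit_det A).mp hA)]
    ext s
    simp [one_apply, Pi.single_apply, eq_comm]
  have hw_norm : star w ⬝ᵥ w = ((∑ s, ‖A⁻¹ r s‖ ^ 2 : ℝ) : 𝕜) := by
    simp [w, dotProduct, RCLike.mul_conj]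
  have hstar : star w ᵥ* A = star (Aᴴ *ᵥ w) := by rw [star_mulVec, conjTranspose_conjTranspose]
  have hsingle : star (Pi.single r (1 : 𝕜)) ⬝ᵥ Pi.single r 1 = ((1 : ℝ) : 𝕜) := by simp
  have key := (le_iff.mp h).dotProduct_mulVec_nonneg w
  rw [sub_mulVec, dotProduct_sub, ← mulVec_mulVec, dotProduct_mulVec, hstar, hw, smul_mulVec,
    one_mulVec, dotProduct_smul, hw_norm, hsingle, smul_eq_mul, ← RCLike.ofReal_mul, sub_nonneg,
    RCLike.ofReal_le_ofReal] at key
  rwa [← one_div c, le_div_iff₀' hc]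

end Matrix

section Quaternionic

variable {N : ℕ}

noncomputable abbrev qResolvent (p : ℂ × ℂ) (X : Matrix (Fin N) (Fin N) ℂ) :
    Matrix (Fin N × Fin 2) (Fin N × Fin 2) ℂ :=
  (dbl X - qId p)⁻¹

theorem dbl_sub_qId (X : Matrix (Fin N) (Fin N) ℂ) (p : ℂ × ℂ) :
    dbl X - qId p = dbl (X - p.1 • 1) - qId (0, p.2) := by
  ext ⟨i, s⟩ ⟨j, t⟩
  rcases eq_or_ne i j with rfl | h
  · fin_cases s <;> fin_cases t <;> simp [dbl, qId, qmat]
  · fin_cases s <;> fin_cases t <;> simp [dbl, qId, qmat, h, h.symm]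

theorem qId_mk_zero_mul_conjTranspose_self (b : ℂ) :
    qId (N := N) (0, b) * (qId (0, b))ᴴ = ((‖b‖ ^ 2 : ℝ) : ℂ) • 1 := by
  have hb : -(Complex.I * b * (Complex.I * conj b)) = (‖b‖ : ℂ) ^ 2 := by
    rw [← Complex.ofReal_pow, Complex.sq_norm, Complex.normSq_eq_conj_mul_self]
    linear_combination (-(conj b * b)) * Complex.I_sq
  ext ⟨i, s⟩ ⟨j, t⟩
  simp only [mul_apply, Fintype.sum_prod_type, Fin.sum_univ_two, conjTranspose_apply, qId,
    of_apply]
  rcases eq_or_ne i j with rfl | h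
  · fin_cases s <;> fin_cases t <;> simp [qmat] <;> linear_combination hb
  · fin_cases s <;> fin_cases t <;> simp [qmat, h, h.symm]

theorem dbl_mul_conjTranspose_qId_add_eq_zero (X : Matrix (Fin N) (Fin N) ℂ) (b : ℂ) :
    dbl X * (qId (0, b))ᴴ + qId (0, b) * (dbl X)ᴴ = 0 := by
  ext ⟨i, s⟩ ⟨j, t⟩
  simp only [Matrix.add_apply, mul_apply, Fintype.sum_prod_type, Fin.sum_univ_two,
    conjTranspose_apply, qId, dbl, of_apply]
  fin_cases s <;> fin_cases t <;>
    simp [qmat, apply_ite (starRingEnd ℂ), mul_ite, Finset.sum_ite_eq] <;> ring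

theorem smul_one_le_mul_conjTranspose_dbl_sub_qId (X : Matrix (Fin N) (Fin N) ℂ) (p : ℂ × ℂ) :
    ((‖p.2‖ ^ 2 : ℝ) : ℂ) • 1 ≤ (dbl X - qId p) * (dbl X - qId p)ᴴ := by
  set K := dbl (X - p.1 • 1)
  have hsplit : (dbl X - qId p) * (dbl X - qId p)ᴴ = K * Kᴴ + ((‖p.2‖ ^ 2 : ℝ) : ℂ) • 1 := by
    have := sub_mul_star_sub_of_add_eq_zero
      (dbl_mul_conjTranspose_qId_add_eq_zero (X - p.1 • 1) p.2)
    rwa [dbl_sub_qId, ← star_eq_conjTranspose, ← star_eq_conjTranspose,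
      ← qId_mk_zero_mul_conjTranspose_self, ← star_eq_conjTranspose]
  rw [le_iff, hsplit, add_sub_cancel_right]
  exact posSemidef_self_mul_conjTranspose K

theorem norm_qResolvent_diag_le (X : Matrix (Fin N) (Fin N) ℂ) {p : ℂ × ℂ} (hb : p.2 ≠ 0)
    (i : Fin N) :
    ‖!₂[qResolvent p X (i, 0) (i, 0), qResolvent p X (i, 0) (i, 1)]‖ ≤ ‖p.2‖⁻¹ := by
  set R := qResolvent p X
  have hrow : ∑ s, ‖R (i, 0) s‖ ^ 2 ≤ (‖p.2‖ ^ 2)⁻¹ := sum_norm_sq_inv_apply_le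
    (pow_pos (norm_pos_iff.2 hb) 2) (smul_one_le_mul_conjTranspose_dbl_sub_qId X p) (i, 0)
  have hpair : ‖!₂[R (i, 0) (i, 0), R (i, 0) (i, 1)]‖ ^ 2 ≤ ∑ s, ‖R (i, 0) s‖ ^ 2 :=
    calc _ = ∑ s ∈ {(i, 0), (i, 1)}, ‖R (i, 0) s‖ ^ 2 := by
          rw [Finset.sum_pair (by simp), EuclideanSpace.norm_sq_eq, Fin.sum_univ_two]
          simp
      _ ≤ _ := Finset.sum_le_sum_of_subset_of_nonneg (Finset.subset_univ _) fun _ _ _ => by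
          positivity
  rw [← pow_le_pow_iff_left₀ (norm_nonneg _) (by positivity) two_ne_zero, inv_pow]
  exact hpair.trans hrow

theorem qnorm_qGreen (p : ℂ × ℂ) (X : Matrix (Fin N) (Fin N) ℂ) :
    qnorm (qGreen p X) =
      ‖(N : ℂ)⁻¹ • ∑ i, !₂[qResolvent p X (i, 0) (i, 0), qResolvent p X (i, 0) (i, 1)]‖ := by
  rw [qnorm, qGreen, EuclideanSpace.norm_eq, Fin.sum_univ_two]
  simp [WithLp.ofLp_sum]

end Quaternionic

theorem qgreen_bound_general
    (N : ℕ) (X : Matrix (Fin N) (Fin N) ℂ)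
    (p : ℂ × ℂ) (hb : p.2 ≠ 0) :
    IsUnit (dbl X - qId p) ∧ qnorm (qGreen p X) ≤ 1 / ‖p.2‖ := by
  refine ⟨isUnit_of_smul_one_le_mul_conjTranspose (pow_pos (norm_pos_iff.2 hb) 2)
    (smul_one_le_mul_conjTranspose_dbl_sub_qId X p), ?_⟩
  rw [qnorm_qGreen, one_div]
  simpa using Finset.norm_inv_card_smul_sum_le (𝕜 := ℂ) Finset.univ _
    (inv_nonneg.2 (norm_nonneg p.2)) fun i _ => norm_qResolvent_diag_le X hb i

/-- For a quaternion `p = a + bj` with `b ≠ 0`, the quaternionic Green's function is well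
defined (`𝐗 − 𝐩` is invertible) and satisfies `|𝒢(p; X)| ≤ 1/|b|`. -/
theorem qgreen_bound
    (N : ℕ) (hN : 1 ≤ N) (X : Matrix (Fin N) (Fin N) ℂ)
    (p : ℂ × ℂ) (hb : p.2 ≠ 0) :
    IsUnit (dbl X - qId p) ∧ qnorm (qGreen p X) ≤ 1 / ‖p.2‖ :=
  qgreen_bound_general N X p hb
end
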